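/- For R = {a → bab}, the set RFC(R) equals { b^n a b^n | n ≥ 1 }, which is not a regular language. -/
import Mathlib

inductive AB where
  | a : AB
  | b : AB
deriving DecidableEq

/-- Right-hand sides of forward closures of `R`. -/
inductive RFC {Γ : Type*} (R : Set (List Γ × List Γ)) : List Γ → Prop where
  | base {l r : List Γ} : (l, r) ∈ R → RFC R r
  | inner {x y l r : List Γ} : RFC R (x ++ l ++ y) → (l, r) ∈ R → RFC R (x ++ r ++ y)
  | eat {x l₁ l₂ r : List Γ} : RFC R (x ++ l₁) → (l₁ ++ l₂, r) ∈ R →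
      l₁ ≠ [] → l₂ ≠ [] → RFC R (x ++ r)

open AB in
/-- `R = {a → bab}`. -/
def R10 : Set (List AB × List AB) :=
  {([a], [b, a, b])}

open AB

lemma key : ∀ (x : List AB) (n k : ℕ) (y : List AB),
    x ++ [a] ++ y = List.replicate n b ++ [a] ++ List.replicate k b →
    x = List.replicate n b ∧ y = List.replicate k b := by
  intro x
  induction x with
  | nil =>
    intro n k y h
    cases n with
    | zero => simpa using h
    | succ m => simp [List.replicate_succ] at h
  | cons c x ih =>
    intro n k y h
    cases n with
    | zero =>
      simp at h
      obtain ⟨rfl, h⟩ := h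
      have := congrArg (List.count a) h
      simp [List.count_replicate] at this
    | succ m =>
      rw [List.replicate_succ] at h
      simp only [List.cons_append] at h
      obtain ⟨rfl, h⟩ := List.cons_eq_cons.mp h
      obtain ⟨h1, h2⟩ := ih m k y (by simpa using h)
      exact ⟨by simp [List.replicate_succ, h1], h2⟩

lemma repl_shift (m : ℕ) (t : List AB) :
    List.replicate m b ++ b :: t = b :: (List.replicate m b ++ t) := by
  induction m with
  | zero => rfl
  | succ k ih => simp [List.replicate_succ, ih]

lemma helper (m : ℕ) : List.replicate m b ++ [b, a, b] ++ List.replicate m b =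
    List.replicate (m + 1) b ++ [a] ++ List.replicate (m + 1) b := by
  simp [List.replicate_succ, List.append_assoc, repl_shift]

lemma memR10 {l r : List AB} (h : (l, r) ∈ R10) : l = [a] ∧ r = [b, a, b] := by
  simpa [R10, Prod.ext_iff] using h

lemma rfc_char (w : List AB) : RFC R10 w ↔
    ∃ n : ℕ, 1 ≤ n ∧ w = List.replicate n b ++ [a] ++ List.replicate n b := by
  constructor
  · intro h
    induction h with
    | base hm =>
      obtain ⟨rfl, rfl⟩ := memR10 hm
      exact ⟨1, le_refl 1, rfl⟩
    | inner h hm ih =>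
      obtain ⟨rfl, rfl⟩ := memR10 hm
      obtain ⟨n, hn, hw⟩ := ih
      obtain ⟨hx, hy⟩ := key _ n n _ hw
      subst hx; subst hy
      exact ⟨n + 1, by omega, helper n⟩
    | eat h hm h1 h2 =>
      obtain ⟨hl, _⟩ := memR10 hm
      exfalso
      have hlen := congrArg List.length hl
      simp at hlen
      have p1 := List.length_pos_iff.mpr h1
      have p2 := List.length_pos_iff.mpr h2
      omega
  · rintro ⟨n, hn, rfl⟩
    induction n with
    | zero => omega
    | succ m ih =>
      rcases Nat.lt_or_ge m 1 with h | h
      · have : m = 0 := by omega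
        subst this
        exact RFC.base (show ([a], [b, a, b]) ∈ R10 from rfl)
      · have prev := ih h
        have step := RFC.inner (x := List.replicate m b) (y := List.replicate m b)
          (l := [a]) (r := [b, a, b]) prev (show ([a], [b, a, b]) ∈ R10 from rfl)
        exact helper m ▸ step

open AB in
/-- `RFC(R) = { b^n a b^n | n ≥ 1 }`, which is not a regular language. -/
theorem rfc_R10 :
    (∀ w : List AB, RFC R10 w ↔
      ∃ n : ℕ, 1 ≤ n ∧ w = List.replicate n b ++ [a] ++ List.replicate n b) ∧
    ¬ Language.IsRegular ({ w | RFC R10 w } : Language AB) := by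
  refine ⟨rfc_char, ?_⟩
  rintro ⟨σ, fin, M, hM⟩
  set n := Fintype.card σ + 1 with hn
  have hw : List.replicate n b ++ [a] ++ List.replicate n b ∈ M.accepts := by
    rw [hM]; exact (rfc_char _).mpr ⟨n, by omega, rfl⟩
  obtain ⟨p, q, r, hsplit, hlen, hq, hsub⟩ := M.pumping_lemma hw (by simp; omega)
  set k := p.length + q.length with hk
  have hkn : k ≤ n := by omega
  have hpq : p ++ q = List.replicate k b := by
    have h1 : (p ++ q ++ r).take k = p ++ q := by
      rw [List.take_append_of_le_length (by simp [hk])]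
      simp [hk]
    rw [← hsplit] at h1
    rw [← h1, List.append_assoc,
      List.take_append_of_le_length (by simpa using hkn),
      List.take_replicate, min_eq_left hkn]
  have hp : p = List.replicate p.length b := by
    have h2 : (p ++ q).take p.length = p := by
      rw [List.take_append_of_le_length le_rfl]; simp
    rw [hpq, List.take_replicate, min_eq_left (by omega)] at h2
    exact h2.symm
  have hr : r = List.replicate (n - k) b ++ [a] ++ List.replicate n b := by
    have hrepl : List.replicate n b = List.replicate k b ++ List.replicate (n - k) b := by
      rw [← List.replicate_add]; congr 1; omega
    have h3 := hsplit
    rw [hpq] at h3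
    nth_rewrite 1 [hrepl] at h3
    simp only [List.append_assoc] at h3
    rw [(List.append_cancel_left h3).symm, List.append_assoc]
  have hpr : p ++ r ∈ M.accepts := by
    apply hsub
    refine ⟨p ++ [], ⟨p, rfl, [], Language.nil_mem_kstar _, rfl⟩, r, rfl, by simp⟩
  rw [hM] at hpr
  obtain ⟨m, hm, heq⟩ := (rfc_char _).mp hpr
  rw [hp, hr] at heq
  rw [← List.append_assoc, ← List.append_assoc, ← List.replicate_add] at heq
  obtain ⟨e1, e2⟩ := key _ m m _ heq
  have l1 : p.length + (n - k) = m := by simpa using congrArg List.length e1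
  have l2 : n = m := by simpa using congrArg List.length e2
  exact hq (List.length_eq_zero_iff.mp (by omega))
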